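/- Two diagonal matrices diag(p^{a₁},…,p^{a_n}) and diag(p^{b₁},…,p^{b_n}) over a discrete valuation ring with uniformizer p, where a₁ ≤ ⋯ ≤ a_n and b₁ ≤ ⋯ ≤ b_n, are equivalent (D₂ = Q⁻¹ D₁ P with P, Q invertible) if and only if aᵢ = bᵢ for all i. -/

import Mathlib

/-!
If `x` divides every `k × k` minor of `M`, it divides every `k × k` minor of `N * M * N'`, since
each minor of a product expands as a combination of minors of the factors. The smallest `k`
exponents of the monotone `a` sum to `a₁ + ⋯ + a_k`, so `p ^ (a₁ + ⋯ + a_k)` divides every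
`k × k` minor of `diag (p ^ aᵢ)`, hence the leading `k × k` minor `p ^ (b₁ + ⋯ + b_k)` of an
equivalent `diag (p ^ bᵢ)`. By symmetry all prefix sums of `a` and `b` agree, so `a = b`.
-/

open Matrix Finset

namespace Matrix

variable {R : Type*} [CommRing R] {k : ℕ} {m n o : Type*}

lemma det_mul_eq_sum_submatrix [Fintype n] (A : Matrix (Fin k) n R) (B : Matrix n (Fin k) R) :
    (A * B).det = ∑ f : Fin k → n, (∏ i, B (f i) i) * (A.submatrix id f).det := by
  calc (A * B).det
      = ∑ f : Fin k → n, ∑ σ : Equiv.Perm (Fin k),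
          Equiv.Perm.sign σ * ∏ i, A (σ i) (f i) * B (f i) i := by
        simp only [det_apply', mul_apply, prod_univ_sum, mul_sum, Fintype.piFinset_univ]
        rw [sum_comm]
    _ = _ := by
        refine sum_congr rfl fun f _ => ?_
        rw [det_apply', mul_sum]
        refine sum_congr rfl fun σ _ => ?_
        simp only [submatrix_apply, id_eq, prod_mul_distrib]
        ring

def DvdMinors (x : R) (k : ℕ) (M : Matrix m n R) : Prop :=
  ∀ (r : Fin k → m) (c : Fin k → n), x ∣ (M.submatrix r c).det

namespace DvdMinors

variable {x : R} {M : Matrix m n R}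

lemma mul_right [Fintype n] (h : DvdMinors x k M) (N : Matrix n o R) : DvdMinors x k (M * N) := by
  intro r c
  rw [submatrix_mul M N r id c Function.bijective_id, det_mul_eq_sum_submatrix]
  exact dvd_sum fun f _ => (h r f).mul_left _

lemma transpose (h : DvdMinors x k M) : DvdMinors x k Mᵀ := by
  intro r c
  rw [← transpose_submatrix, det_transpose]
  exact h c r

lemma mul_left [Fintype m] (h : DvdMinors x k M) (N : Matrix o m R) : DvdMinors x k (N * M) := by
  simpa using (h.transpose.mul_right Nᵀ).transpose

end DvdMinors

end Matrix

lemma Fin.val_le_of_strictMono {k n : ℕ} {g : Fin k → Fin n} (hg : StrictMono g) (j : Fin k) :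
    (j : ℕ) ≤ g j := by
  simpa using Finset.card_le_card_of_injOn g (s := Iio j) (t := Iio (g j))
    (fun x hx => by simpa using hg (by simpa using hx)) hg.injective.injOn

lemma sum_castLE_le_sum_of_injective {M : Type*} [AddCommMonoid M] [PartialOrder M]
    [IsOrderedAddMonoid M] {n k : ℕ} {a : Fin n → M} (ha : Monotone a) (hk : k ≤ n)
    {c : Fin k → Fin n} (hc : Function.Injective c) :
    ∑ j : Fin k, a (Fin.castLE hk j) ≤ ∑ j : Fin k, a (c j) := by
  have hcard : (univ.image c).card = k := by simp [card_image_of_injective _ hc]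
  set g := (univ.image c).orderEmbOfFin hcard
  have hsum : ∑ j : Fin k, a (c j) = ∑ j : Fin k, a (g j) := by
    rw [← sum_image (fun x _ y _ h => hc h), ← sum_image (fun x _ y _ h => g.injective h)]
    simp [g, image_orderEmbOfFin_univ]
  rw [hsum]
  exact sum_le_sum fun j _ => ha (Fin.val_le_of_strictMono g.strictMono j)

lemma dvdMinors_diagonal_pow {R : Type*} [CommRing R] {n k : ℕ} (p : R) {a : Fin n → ℕ}
    (ha : Monotone a) (hk : k ≤ n) :
    DvdMinors (p ^ ∑ j : Fin k, a (Fin.castLE hk j)) k (diagonal fun i => p ^ a i) := by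
  intro r c
  by_cases hr : Function.Injective r
  swap
  · obtain ⟨i, j, hij, hne⟩ := Function.not_injective_iff.mp hr
    rw [det_zero_of_row_eq hne (funext fun l => by simp [hij])]
    exact dvd_zero _
  by_cases hc : Function.Injective c
  swap
  · obtain ⟨i, j, hij, hne⟩ := Function.not_injective_iff.mp hc
    rw [det_zero_of_column_eq hne fun l => by simp [hij]]
    exact dvd_zero _
  rw [det_apply']
  refine dvd_sum fun σ _ => Dvd.dvd.mul_left ?_ _
  by_cases hrc : ∀ i, r (σ i) = c i
  · have hterm : ∀ i, (diagonal fun i => p ^ a i).submatrix r c (σ i) i = p ^ a (c i) := by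
      intro i
      rw [submatrix_apply, hrc i, diagonal_apply_eq]
    rw [prod_congr rfl fun i _ => hterm i, prod_pow_eq_pow_sum]
    exact pow_dvd_pow p (sum_castLE_le_sum_of_injective ha hk hc)
  · obtain ⟨i, hi⟩ := not_forall.mp hrc
    rw [prod_eq_zero (mem_univ i) (by rw [submatrix_apply, diagonal_apply_ne _ hi])]
    exact dvd_zero _

lemma sum_castLE_le_of_diagonal_pow_eq_mul {R : Type*} [CommRing R] [IsDomain R] {p : R}
    (hp : Irreducible p) {n : ℕ} {a b : Fin n → ℕ} (ha : Monotone a)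
    {A B : Matrix (Fin n) (Fin n) R}
    (h : diagonal (fun i => p ^ b i) = A * diagonal (fun i => p ^ a i) * B)
    {k : ℕ} (hk : k ≤ n) :
    ∑ j : Fin k, a (Fin.castLE hk j) ≤ ∑ j : Fin k, b (Fin.castLE hk j) := by
  have hdvd : DvdMinors (p ^ ∑ j : Fin k, a (Fin.castLE hk j)) k
      (diagonal fun i => p ^ b i) :=
    h ▸ ((dvdMinors_diagonal_pow p ha hk).mul_left A).mul_right B
  have hlead := hdvd (Fin.castLE hk) (Fin.castLE hk)
  rw [submatrix_diagonal _ _ (Fin.castLE_injective hk), det_diagonal] at hlead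
  simpa only [Function.comp_apply, prod_pow_eq_pow_sum,
    pow_dvd_pow_iff hp.ne_zero hp.not_isUnit] using hlead

lemma eq_of_forall_sum_castLE_eq {M : Type*} [AddCancelCommMonoid M] {n : ℕ} {a b : Fin n → M}
    (h : ∀ k (hk : k ≤ n), ∑ j : Fin k, a (Fin.castLE hk j) = ∑ j : Fin k, b (Fin.castLE hk j)) :
    a = b := by
  funext i
  have hprefix := h i i.isLt.le
  have hsucc := h (i + 1) i.isLt
  rw [Fin.sum_univ_castSucc, Fin.sum_univ_castSucc] at hsucc
  exact add_left_cancel ((congrArg (· + a i) hprefix).symm.trans hsucc)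

theorem stmt_18_general {R : Type*} [CommRing R] [IsDomain R]
    (p : R) (hp : Irreducible p) {n : ℕ}
    (a b : Fin n → ℕ) (ha : Monotone a) (hb : Monotone b) :
    (∃ P Q : GL (Fin n) R,
        Matrix.diagonal (fun i => p ^ b i)
          = (↑Q⁻¹ : Matrix (Fin n) (Fin n) R) * Matrix.diagonal (fun i => p ^ a i)
              * (↑P : Matrix (Fin n) (Fin n) R)) ↔ a = b := by
  refine ⟨fun ⟨P, Q, h⟩ => ?_, fun hab => ⟨1, 1, by simp [hab]⟩⟩
  have h' : diagonal (fun i => p ^ a i)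
      = (Q : Matrix (Fin n) (Fin n) R) * diagonal (fun i => p ^ b i) * (P⁻¹ : GL (Fin n) R) := by
    simp [h, ← mul_assoc]
  exact eq_of_forall_sum_castLE_eq fun k hk => le_antisymm
    (sum_castLE_le_of_diagonal_pow_eq_mul hp ha h hk)
    (sum_castLE_le_of_diagonal_pow_eq_mul hp hb h' hk)

theorem stmt_18 {R : Type*} [CommRing R] [IsDomain R] [IsDiscreteValuationRing R]
    (p : R) (hp : Irreducible p) {n : ℕ}
    (a b : Fin n → ℕ) (ha : Monotone a) (hb : Monotone b) :
    (∃ P Q : GL (Fin n) R,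
        Matrix.diagonal (fun i => p ^ b i)
          = (↑Q⁻¹ : Matrix (Fin n) (Fin n) R) * Matrix.diagonal (fun i => p ^ a i)
              * (↑P : Matrix (Fin n) (Fin n) R)) ↔ a = b :=
  stmt_18_general p hp a b ha hb
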